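/- arXiv:2602.07315 — 3 statements merged into one kernel-verified Lean document; each statement's English description precedes it below -/
import Mathlib

section
/- Let P0, P1, P2 be nonzero real polynomials and e a nonzero real constant such that P2·P0·P1 + P0·P1' − P1·P0' = e·P1^3. Then deg P0 + deg P2 = 2·deg P1, and the leading coefficients satisfy lc(P2)·lc(P0) = e·lc(P1)^2. -/
/-!
The left-hand side is `P2 * P0 * P1` plus the Wronskian `W(P0, P1)`, whose degree is less than
`deg P0 + deg P1`. Hence `P2 * P0 * P1` alone determines the degree and leading coefficient of
`e * P1 ^ 3`; cancelling one factor `P1` gives both claims.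
-/

open Polynomial

namespace Polynomial

variable {R : Type*} [CommRing R] [IsDomain R] {a b c : R[X]}

theorem degree_wronskian_lt_degree_mul_mul (ha : a ≠ 0) (hb : b ≠ 0) (hc : c ≠ 0) :
    (wronskian a b).degree < (c * a * b).degree :=
  calc (wronskian a b).degree < a.degree + b.degree := degree_wronskian_lt_add ha hb
    _ ≤ c.degree + a.degree + b.degree := by
      rw [add_assoc]
      exact le_add_of_nonneg_left (zero_le_degree_iff.mpr hc)
    _ = (c * a * b).degree := by rw [degree_mul, degree_mul]

theorem natDegree_mul_mul_add_wronskian (ha : a ≠ 0) (hb : b ≠ 0) (hc : c ≠ 0) :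
    (c * a * b + wronskian a b).natDegree = c.natDegree + a.natDegree + b.natDegree := by
  rw [natDegree_add_eq_left_of_degree_lt (degree_wronskian_lt_degree_mul_mul ha hb hc),
    natDegree_mul (mul_ne_zero hc ha) hb, natDegree_mul hc ha]

theorem leadingCoeff_mul_mul_add_wronskian (ha : a ≠ 0) (hb : b ≠ 0) (hc : c ≠ 0) :
    (c * a * b + wronskian a b).leadingCoeff =
      c.leadingCoeff * a.leadingCoeff * b.leadingCoeff := by
  rw [leadingCoeff_add_of_degree_lt' (degree_wronskian_lt_degree_mul_mul ha hb hc),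
    leadingCoeff_mul, leadingCoeff_mul]

end Polynomial

theorem darboux_degree_relation (P0 P1 P2 : ℝ[X]) (e : ℝ)
    (h0 : P0 ≠ 0) (h1 : P1 ≠ 0) (h2 : P2 ≠ 0) (he : e ≠ 0)
    (heq : P2 * P0 * P1 + P0 * (derivative P1) - P1 * (derivative P0) = C e * P1 ^ 3) :
    P0.natDegree + P2.natDegree = 2 * P1.natDegree ∧
      P2.leadingCoeff * P0.leadingCoeff = e * P1.leadingCoeff ^ 2 := by
  have hW : P2 * P0 * P1 + wronskian P0 P1 = C e * P1 ^ 3 := by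
    rw [wronskian]; linear_combination heq
  have hdeg := natDegree_mul_mul_add_wronskian h0 h1 h2
  rw [hW, natDegree_C_mul he, natDegree_pow] at hdeg
  have hlc := leadingCoeff_mul_mul_add_wronskian h0 h1 h2
  rw [hW, leadingCoeff_mul, leadingCoeff_C, leadingCoeff_pow] at hlc
  refine ⟨by omega, mul_right_cancel₀ (leadingCoeff_ne_zero.mpr h1) ?_⟩
  linear_combination -hlc
end

section
/- Let P be a real polynomial of degree at least 1. Then there do not exist real polynomials M and N with M ≠ 0, gcd(M, N) = 1, satisfying M·(M − N' + N·P) = −N·M'. -/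
/-! Reducing the equation modulo `M` gives `M ∣ N * M'`, so coprimality yields `M ∣ M'`, i.e. `M`
is a nonzero constant. The equation then says `M = N' - N * P`, whose degree is
`deg N + deg P ≥ 1` as soon as `N ≠ 0`, while `N = 0` would force `M = 0`. -/

open Polynomial

theorem Polynomial.natDegree_derivative_sub_mul {R : Type*} [Ring R] [NoZeroDivisors R]
    {N P : R[X]} (hN : N ≠ 0) (hP : 1 ≤ P.natDegree) :
    (derivative N - N * P).natDegree = N.natDegree + P.natDegree := by
  have hP0 : P ≠ 0 := by rintro rfl; simp at hP
  rw [← natDegree_mul hN hP0]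
  refine natDegree_sub_eq_right_of_natDegree_lt ?_
  rw [natDegree_mul hN hP0]
  have := natDegree_derivative_le N
  omega

theorem no_elementary_antiderivative_core (P : ℝ[X]) (hP : 1 ≤ P.natDegree) :
    ¬ ∃ M N : ℝ[X], M ≠ 0 ∧ IsCoprime M N ∧
      M * (M - derivative N + N * P) = -(N * derivative M) := by
  rintro ⟨M, N, hM, hcop, heq⟩
  have hM_dvd : M ∣ N * derivative M := ⟨-(M - derivative N + N * P), by linear_combination heq⟩
  have hM' : derivative M = 0 := dvd_derivative_iff.mp (hcop.dvd_of_dvd_mul_left hM_dvd)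
  have hMN : M = derivative N - N * P := by
    have h : M * (M - derivative N + N * P) = 0 := by rw [heq, hM', mul_zero, neg_zero]
    linear_combination (mul_eq_zero.mp h).resolve_left hM
  have hN : N ≠ 0 := by
    rintro rfl
    exact hM (by simpa using hMN)
  have hdeg := natDegree_derivative_sub_mul hN hP
  rw [← hMN, derivative_eq_zero.mp hM'] at hdeg
  omega
end

section
/- Let P0, P1, P2 : ℝ → ℝ be continuous, define ℘(x) = ∫_0^x P2(ξ) dξ and χ(x) = ∫_0^x exp(−℘(ξ)) dξ, and let χ⁻¹ be the inverse of χ. Set f(u) = P1(χ⁻¹(u)) and g(u) = P0(χ⁻¹(u))·exp(−℘(χ⁻¹(u))). If (x(t), y(t)) is a differentiable solution of x' = y, y' = P0(x) + P1(x)·y + P2(x)·y^2, then u(t) = χ(x(t)), v(t) = y(t)·exp(−℘(x(t))) satisfies u' = v and v' = g(u) + f(u)·v. -/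
theorem cherkas_to_lienard (P0 P1 P2 : ℝ → ℝ)
    (h0 : Continuous P0) (h1 : Continuous P1) (h2 : Continuous P2)
    (wp χ : ℝ → ℝ)
    (hwp : ∀ x : ℝ, wp x = ∫ ξ in (0:ℝ)..x, P2 ξ)
    (hχ : ∀ x : ℝ, χ x = ∫ ξ in (0:ℝ)..x, Real.exp (-wp ξ))
    (χinv : ℝ → ℝ) (hleft : ∀ x : ℝ, χinv (χ x) = x)
    (f g : ℝ → ℝ)
    (hf : ∀ u : ℝ, f u = P1 (χinv u))
    (hg : ∀ u : ℝ, g u = P0 (χinv u) * Real.exp (-wp (χinv u)))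
    (x y : ℝ → ℝ)
    (hx : ∀ t : ℝ, HasDerivAt x (y t) t)
    (hy : ∀ t : ℝ,
      HasDerivAt y (P0 (x t) + P1 (x t) * y t + P2 (x t) * (y t) ^ 2) t) :
    ∀ t : ℝ,
      HasDerivAt (fun s => χ (x s)) (y t * Real.exp (-wp (x t))) t ∧
      HasDerivAt (fun s => y s * Real.exp (-wp (x s)))
        (g (χ (x t)) + f (χ (x t)) * (y t * Real.exp (-wp (x t)))) t := by
  -- wp is continuous
  have hwpc : Continuous wp := by
    have : Continuous fun a : ℝ => ∫ ξ in (0:ℝ)..a, P2 ξ :=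
      intervalIntegral.continuous_primitive (fun a b => h2.intervalIntegrable a b) 0
    simpa [funext hwp] using this
  have hec : Continuous fun ξ => Real.exp (-wp ξ) := (hwpc.neg).rexp
  -- derivative of wp
  have hwpd : ∀ a : ℝ, HasDerivAt wp (P2 a) a := by
    intro a
    have := intervalIntegral.integral_hasDerivAt_right (h2.intervalIntegrable 0 a)
      (h2.stronglyMeasurableAtFilter _ _) h2.continuousAt
    simpa [funext hwp] using this
  -- derivative of χ
  have hχd : ∀ a : ℝ, HasDerivAt χ (Real.exp (-wp a)) a := by
    intro a
    have := intervalIntegral.integral_hasDerivAt_right (hec.intervalIntegrable 0 a)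
      (hec.stronglyMeasurableAtFilter _ _) hec.continuousAt
    simpa [funext hχ] using this
  intro t
  have hu : HasDerivAt (fun s => χ (x s)) (y t * Real.exp (-wp (x t))) t := by
    have := (hχd (x t)).comp t (hx t)
    simpa [mul_comm, Function.comp_def] using this
  refine ⟨hu, ?_⟩
  have hE : HasDerivAt (fun s => Real.exp (-wp (x s)))
      (Real.exp (-wp (x t)) * (-(P2 (x t)) * y t)) t := by
    have hinner : HasDerivAt (fun s => -wp (x s)) (-(P2 (x t)) * y t) t := by
      have := ((hwpd (x t)).comp t (hx t)).neg
      simpa [mul_comm, Function.comp_def, Pi.neg_def] using this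
    simpa using hinner.exp
  have hv := (hy t).mul hE
  refine hv.congr_deriv ?_
  rw [hg, hf, hleft]
  ring
end
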